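/- Let f be a polynomial with rational coefficients of degree d ≥ 2. Then the density of the image of f in ℚ is zero: the ratio #{y ∈ ℚ : y = f(x) for some x ∈ ℚ, H(y) ≤ B} / #{x ∈ ℚ : H(x) ≤ B} tends to 0 as B → ∞. Moreover, there exist positive real constants B₀ and E₀ (depending only on f) such that for all B ≥ B₀ this ratio is at most E₀·B^{(2/d) − 2}. -/

import Mathlib

/-!
A rational `x = p/q` in lowest terms and `f ∈ ℚ[X]` of degree `d` give, after clearing the
denominators of `f`, the integer `F = q^d g(p/q)` with `g ∈ ℤ[X]`, so `g(x) = F / q^d`. Because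
`p` and `q` are coprime, every common divisor of `F` and `q` divides the leading coefficient `A`
of `g`, so the cancellation in `F / q^d` is by a factor dividing `A^d`. Because the leading term
dominates for large `|x|`, `max(|F|, q^d) ≫ max(|p|, q)^d`. Together: `H(x)^d ≪ H(f(x))`.

Hence the rationals of height `≤ B` in the image of `f` are values at points of height
`≪ B^{1/d}`, of which there are `≪ B^{2/d}`. On the other hand there are `≫ B^2` rationals of
height `≤ B`: at least a positive proportion `1 - ∑_{k ≥ 2} k⁻² > 0` of the pairs in `[1, B]^2`
are coprime.
-/

open Polynomial

/-- The height of a rational number `x` (in lowest terms): the maximum of the absolute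
value of its numerator and its denominator. -/
def ratHeight (x : ℚ) : ℕ := max x.num.natAbs x.den

open Finset

theorem ratHeight_pos (x : ℚ) : 0 < ratHeight x := lt_max_of_lt_right x.pos

theorem ratHeight_eq_den_mul_max (x : ℚ) : (ratHeight x : ℚ) = x.den * max |x| 1 := by
  have hnum : (x.num.natAbs : ℚ) = x.den * |x| := by
    rw [Nat.cast_natAbs, Int.cast_abs, ← Rat.den_mul_eq_num, abs_mul, Nat.abs_cast]
  rw [ratHeight, Nat.cast_max, hnum, mul_max_of_nonneg _ _ (Nat.cast_nonneg _), mul_one]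

theorem ratHeight_div_mul_gcd (n : ℤ) {d : ℕ} (hd : d ≠ 0) :
    ratHeight (n / d) * n.natAbs.gcd d = max n.natAbs d := by
  have hg : n.natAbs.gcd d ∣ n.natAbs := Nat.gcd_dvd_left _ _
  have hg' : n.natAbs.gcd d ∣ d := Nat.gcd_dvd_right _ _
  rw [ratHeight, ← Rat.mkRat_eq_div, Rat.num_mkRat, Rat.den_mkRat, if_neg hd, if_neg hd,
    Nat.gcd_comm, Int.natAbs_ediv_of_dvd (Int.ofNat_dvd_left.mpr hg), Int.natAbs_natCast,
    ← Nat.mul_max_mul_right, Nat.div_mul_cancel hg, Nat.div_mul_cancel hg']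

theorem ratHeight_div_le (n : ℤ) {d : ℕ} (hd : d ≠ 0) :
    ratHeight (n / d) ≤ max n.natAbs d := by
  rw [← ratHeight_div_mul_gcd n hd]
  exact Nat.le_mul_of_pos_right _ (Nat.gcd_pos_of_pos_right _ (Nat.pos_of_ne_zero hd))

theorem ratHeight_mul_le (x y : ℚ) : ratHeight (x * y) ≤ ratHeight x * ratHeight y := by
  rw [Rat.mul_def', Rat.mkRat_eq_div]
  refine (ratHeight_div_le _ (Nat.mul_ne_zero x.den_nz y.den_nz)).trans ?_
  rw [Int.natAbs_mul]
  exact max_le (Nat.mul_le_mul (le_max_left _ _) (le_max_left _ _))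
    (Nat.mul_le_mul (le_max_right _ _) (le_max_right _ _))

theorem mapsTo_num_den_setOf_ratHeight_le (B : ℝ) :
    Set.MapsTo (fun x : ℚ => (x.num, (x.den : ℤ))) {x | (ratHeight x : ℝ) ≤ B}
      (Icc (-⌊B⌋₊ : ℤ) ⌊B⌋₊ ×ˢ Icc 1 (⌊B⌋₊ : ℤ) : Finset (ℤ × ℤ)) := by
  intro x hx
  have hH : ratHeight x ≤ ⌊B⌋₊ := Nat.le_floor hx
  have hnum : x.num.natAbs ≤ ⌊B⌋₊ := (le_max_left _ _).trans hH
  have hden : x.den ≤ ⌊B⌋₊ := (le_max_right _ _).trans hH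
  simp only [coe_product, coe_Icc, Set.mem_prod, Set.mem_Icc]
  refine ⟨⟨?_, ?_⟩, ?_, ?_⟩ <;> [skip; skip; exact_mod_cast x.pos; exact_mod_cast hden] <;> omega

theorem num_den_injective : Function.Injective (fun x : ℚ => (x.num, (x.den : ℤ))) := by
  intro x y h
  simp only [Prod.mk.injEq, Nat.cast_inj] at h
  exact Rat.ext h.1 h.2

theorem finite_setOf_ratHeight_le (B : ℝ) : {x : ℚ | (ratHeight x : ℝ) ≤ B}.Finite :=
  .of_injOn (mapsTo_num_den_setOf_ratHeight_le B) num_den_injective.injOn (Finset.finite_toSet _)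

theorem ncard_setOf_ratHeight_le_le (B : ℝ) :
    ({x : ℚ | (ratHeight x : ℝ) ≤ B}.ncard : ℝ) ≤ 3 * B ^ 2 := by
  set N := ⌊B⌋₊
  have hcard := Set.ncard_le_ncard_of_injOn _ (mapsTo_num_den_setOf_ratHeight_le B)
    num_den_injective.injOn (Finset.finite_toSet _)
  rw [Set.ncard_coe_finset, Finset.card_product, Int.card_Icc, Int.card_Icc,
    show ((N : ℤ) + 1 - -N).toNat = 2 * N + 1 by omega, show ((N : ℤ) + 1 - 1).toNat = N by omega]
    at hcard
  have hN : (N : ℝ) ^ 2 ≤ B ^ 2 := by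
    rcases le_or_gt 0 B with hB | hB
    · exact pow_le_pow_left₀ (Nat.cast_nonneg _) (Nat.floor_le hB) 2
    · simp [N, Nat.floor_of_nonpos hB.le, sq_nonneg]
  have hN' : (N : ℝ) ≤ N ^ 2 := by exact_mod_cast Nat.le_self_pow two_ne_zero N
  have : ({x : ℚ | (ratHeight x : ℝ) ≤ B}.ncard : ℝ) ≤ (2 * N + 1) * N := by exact_mod_cast hcard
  nlinarith

theorem sum_Icc_two_inv_sq_le (N : ℕ) : ∑ k ∈ Icc 2 N, ((k : ℝ) ^ 2)⁻¹ ≤ 11 / 12 := by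
  have hsub : Icc 2 N ⊆ insert 2 (Ioo 2 (N + 1)) := by
    intro k hk
    simp only [mem_Icc, mem_insert, mem_Ioo] at hk ⊢
    omega
  calc ∑ k ∈ Icc 2 N, ((k : ℝ) ^ 2)⁻¹
      ≤ ∑ k ∈ insert 2 (Ioo 2 (N + 1)), ((k : ℝ) ^ 2)⁻¹ :=
        sum_le_sum_of_subset_of_nonneg hsub fun _ _ _ => by positivity
    _ = 1 / 4 + ∑ k ∈ Ioo 2 (N + 1), ((k : ℝ) ^ 2)⁻¹ := by
        rw [sum_insert (by simp)]; norm_num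
    _ ≤ 1 / 4 + 2 / (2 + 1) := by
        have := sum_Ioo_inv_sq_le (α := ℝ) 2 (N + 1)
        push_cast at this
        linarith
    _ = 11 / 12 := by norm_num

theorem not_coprime_subset_biUnion_dvd (N : ℕ) :
    {ab ∈ Ioc 0 N ×ˢ Ioc 0 N | ¬ ab.1.Coprime ab.2} ⊆
      (Icc 2 N).biUnion fun k => {a ∈ Ioc 0 N | k ∣ a} ×ˢ {b ∈ Ioc 0 N | k ∣ b} := by
  rintro ⟨a, b⟩ hab
  simp only [mem_filter, mem_product, mem_Ioc] at hab
  obtain ⟨⟨⟨ha0, haN⟩, hb0, hbN⟩, hcop⟩ := hab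
  have hg1 : a.gcd b ≠ 1 := hcop
  have hg0 : 0 < a.gcd b := Nat.gcd_pos_of_pos_left _ ha0
  have hgN : a.gcd b ≤ N := (Nat.gcd_le_left _ ha0).trans haN
  simp only [mem_biUnion, mem_Icc, mem_product, mem_filter, mem_Ioc]
  exact ⟨a.gcd b, ⟨by omega, hgN⟩, ⟨⟨ha0, haN⟩, Nat.gcd_dvd_left a b⟩,
    ⟨hb0, hbN⟩, Nat.gcd_dvd_right a b⟩

theorem card_not_coprime_le (N : ℕ) :
    (#{ab ∈ Ioc 0 N ×ˢ Ioc 0 N | ¬ ab.1.Coprime ab.2} : ℝ) ≤ 11 / 12 * N ^ 2 := by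
  have hcard : #{ab ∈ Ioc 0 N ×ˢ Ioc 0 N | ¬ ab.1.Coprime ab.2} ≤
      ∑ k ∈ Icc 2 N, (N / k) * (N / k) := by
    refine (card_le_card (not_coprime_subset_biUnion_dvd N)).trans (card_biUnion_le.trans ?_)
    simp only [card_product, Nat.Ioc_filter_dvd_card_eq_div, le_refl]
  have hterm (k : ℕ) : (((N / k) * (N / k) : ℕ) : ℝ) ≤ N ^ 2 * ((k : ℝ) ^ 2)⁻¹ := by
    have hdiv : ((N / k : ℕ) : ℝ) ≤ N / k := Nat.cast_div_le
    calc (((N / k) * (N / k) : ℕ) : ℝ) = ((N / k : ℕ) : ℝ) ^ 2 := by push_cast; ring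
      _ ≤ ((N : ℝ) / k) ^ 2 := pow_le_pow_left₀ (Nat.cast_nonneg _) hdiv 2
      _ = N ^ 2 * ((k : ℝ) ^ 2)⁻¹ := by ring
  calc (#{ab ∈ Ioc 0 N ×ˢ Ioc 0 N | ¬ ab.1.Coprime ab.2} : ℝ)
      ≤ ∑ k ∈ Icc 2 N, (((N / k) * (N / k) : ℕ) : ℝ) := by exact_mod_cast hcard
    _ ≤ N ^ 2 * ∑ k ∈ Icc 2 N, ((k : ℝ) ^ 2)⁻¹ := by
        rw [mul_sum]; exact sum_le_sum fun k _ => hterm k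
    _ ≤ N ^ 2 * (11 / 12) := by gcongr; exact sum_Icc_two_inv_sq_le N
    _ = 11 / 12 * N ^ 2 := by ring

theorem card_coprime_ge (N : ℕ) :
    (N : ℝ) ^ 2 / 12 ≤ #{ab ∈ Ioc 0 N ×ˢ Ioc 0 N | ab.1.Coprime ab.2} := by
  have hsplit := card_filter_add_card_filter_not
    (s := Ioc 0 N ×ˢ Ioc 0 N) (p := fun ab : ℕ × ℕ => ab.1.Coprime ab.2)
  rw [card_product, Nat.card_Ioc, Nat.sub_zero] at hsplit
  have hsplitR : (#{ab ∈ Ioc 0 N ×ˢ Ioc 0 N | ab.1.Coprime ab.2} : ℝ) +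
      #{ab ∈ Ioc 0 N ×ˢ Ioc 0 N | ¬ ab.1.Coprime ab.2} = N ^ 2 := by
    exact_mod_cast hsplit.trans (sq N).symm
  linarith [card_not_coprime_le N]

theorem card_coprime_le_ncard_setOf_ratHeight_le (B : ℝ) :
    #{ab ∈ Ioc 0 ⌊B⌋₊ ×ˢ Ioc 0 ⌊B⌋₊ | ab.1.Coprime ab.2} ≤
      {x : ℚ | (ratHeight x : ℝ) ≤ B}.ncard := by
  rw [← Set.ncard_coe_finset]
  refine Set.ncard_le_ncard_of_injOn (fun ab : ℕ × ℕ => ((ab.1 : ℤ) : ℚ) / (ab.2 : ℚ))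
    ?_ ?_ (finite_setOf_ratHeight_le B)
  · rintro ⟨a, b⟩ hab
    simp only [coe_filter, mem_product, mem_Ioc, Set.mem_ofPred_eq] at hab
    obtain ⟨⟨⟨-, haN⟩, hb0, hbN⟩, -⟩ := hab
    have h := ratHeight_div_le a hb0.ne'
    rw [Int.natAbs_natCast] at h
    have hB : 0 ≤ B := (Nat.pos_of_floor_pos (by omega)).le
    exact (Nat.cast_le.mpr (h.trans (max_le haN hbN))).trans (Nat.floor_le hB)
  · rintro ⟨a, b⟩ hab ⟨a', b'⟩ hab' h
    simp only [coe_filter, mem_product, mem_Ioc, Set.mem_ofPred_eq] at hab hab'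
    have := Rat.div_int_inj (a := a) (b := b) (c := a') (d := b') (by omega) (by omega)
      hab.2 hab'.2 (by simpa only [Int.cast_natCast] using h)
    simp only [Nat.cast_inj] at this
    rw [this.1, this.2]

theorem ncard_setOf_ratHeight_le_ge {B : ℝ} (hB : 1 ≤ B) :
    B ^ 2 / 48 ≤ ({x : ℚ | (ratHeight x : ℝ) ≤ B}.ncard : ℝ) := by
  have hN : B / 2 ≤ ⌊B⌋₊ := by
    have := Nat.lt_floor_add_one B
    have : (1 : ℝ) ≤ ⌊B⌋₊ := by exact_mod_cast Nat.one_le_floor_iff B |>.mpr hB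
    linarith
  calc B ^ 2 / 48 ≤ (⌊B⌋₊ : ℝ) ^ 2 / 12 := by nlinarith
    _ ≤ _ := card_coprime_ge _
    _ ≤ _ := by exact_mod_cast card_coprime_le_ncard_setOf_ratHeight_le B

section LeadingTerm

variable {K : Type*} [Field K] [LinearOrder K] [IsStrictOrderedRing K]

theorem abs_mul_abs_eval_sub_leadingTerm_le (P : K[X]) {x : K} (hx : 1 ≤ |x|) :
    |x| * |P.eval x - P.leadingCoeff * x ^ P.natDegree| ≤
      (∑ i ∈ range P.natDegree, |P.coeff i|) * |x| ^ P.natDegree := by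
  rw [eval_eq_sum_range, sum_range_succ, leadingCoeff, add_sub_cancel_right, sum_mul]
  refine (mul_le_mul_of_nonneg_left (abs_sum_le_sum_abs _ _) (abs_nonneg x)).trans ?_
  rw [mul_sum]
  refine sum_le_sum fun i hi => ?_
  rw [abs_mul, abs_pow, mul_left_comm, ← pow_succ']
  exact mul_le_mul_of_nonneg_left (pow_le_pow_right₀ hx (mem_range.mp hi)) (abs_nonneg _)

theorem exists_abs_leadingCoeff_mul_pow_le (P : K[X]) :
    ∃ R : K, 1 ≤ R ∧ ∀ x : K, R ≤ |x| →
      |P.leadingCoeff| * |x| ^ P.natDegree ≤ 2 * |P.eval x| := by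
  rcases eq_or_ne P 0 with rfl | hP
  · exact ⟨1, le_rfl, fun x _ => by simp⟩
  set S := ∑ i ∈ range P.natDegree, |P.coeff i|
  have hlc : 0 < |P.leadingCoeff| := abs_pos.mpr (leadingCoeff_ne_zero.mpr hP)
  refine ⟨max 1 (2 * S / |P.leadingCoeff|), le_max_left _ _, fun x hx => ?_⟩
  have hx1 : 1 ≤ |x| := (le_max_left _ _).trans hx
  have hxS : 2 * S ≤ |P.leadingCoeff| * |x| := by
    rw [← div_le_iff₀' hlc]; exact (le_max_right _ _).trans hx
  have htail := abs_mul_abs_eval_sub_leadingTerm_le P hx1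
  have htri := abs_sub_abs_le_abs_sub (P.leadingCoeff * x ^ P.natDegree) (P.eval x)
  rw [abs_sub_comm, abs_mul, abs_pow] at htri
  have hxd : 0 ≤ |x| ^ P.natDegree := by positivity
  have hx0 : 0 < |x| := by linarith
  -- `|x| |lc| |x|^d ≤ |x| |P x| + S |x|^d` and `S |x|^d ≤ |lc| |x| |x|^d / 2`
  have : |x| * (|P.leadingCoeff| * |x| ^ P.natDegree) ≤ |x| * (2 * |P.eval x|) := by
    nlinarith
  exact le_of_mul_le_mul_left this hx0

theorem exists_max_abs_one_pow_le (P : K[X]) :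
    ∃ C : K, 0 < C ∧ ∀ x : K, max |x| 1 ^ P.natDegree ≤ C * max |P.eval x| 1 := by
  rcases eq_or_ne P 0 with rfl | hP
  · exact ⟨1, one_pos, fun x => by simp⟩
  obtain ⟨R, hR1, hR⟩ := exists_abs_leadingCoeff_mul_pow_le P
  have hlc : 0 < |P.leadingCoeff| := abs_pos.mpr (leadingCoeff_ne_zero.mpr hP)
  have hR0 : 0 ≤ R ^ P.natDegree := by positivity
  have hlc' : 0 ≤ 2 / |P.leadingCoeff| := by positivity
  refine ⟨R ^ P.natDegree + 2 / |P.leadingCoeff|, by positivity, fun x => ?_⟩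
  rcases le_or_gt R |x| with hx | hx
  · calc max |x| 1 ^ P.natDegree = |x| ^ P.natDegree := by rw [max_eq_left (hR1.trans hx)]
      _ ≤ 2 / |P.leadingCoeff| * |P.eval x| := by
          rw [div_mul_eq_mul_div, le_div_iff₀' hlc]; exact hR x hx
      _ ≤ (R ^ P.natDegree + 2 / |P.leadingCoeff|) * max |P.eval x| 1 :=
          mul_le_mul (le_add_of_nonneg_left hR0) (le_max_left _ _) (abs_nonneg _) (by positivity)
  · calc max |x| 1 ^ P.natDegree ≤ R ^ P.natDegree :=
          pow_le_pow_left₀ (by positivity) (max_le hx.le hR1) _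
      _ ≤ (R ^ P.natDegree + 2 / |P.leadingCoeff|) * max |P.eval x| 1 :=
          (le_add_of_nonneg_right hlc').trans
            (le_mul_of_one_le_right (by positivity) (le_max_right _ _))

end LeadingTerm

theorem gcd_eval_scaleRoots_dvd_leadingCoeff_pow {R : Type*} [CommRing R] [GCDMonoid R]
    (g : R[X]) {p q : R} (hpq : IsCoprime p q) :
    gcd ((g.scaleRoots q).eval p) (q ^ g.natDegree) ∣ g.leadingCoeff ^ g.natDegree := by
  set u := gcd ((g.scaleRoots q).eval p) q
  have hu_lead : u ∣ g.leadingCoeff * p ^ g.natDegree := by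
    have := dvd_term_of_dvd_eval_of_dvd_terms g.natDegree
      (gcd_dvd_left ((g.scaleRoots q).eval p) q) fun j hj => ?_
    · rwa [coeff_scaleRoots_natDegree] at this
    rw [coeff_scaleRoots]
    rcases lt_or_gt_of_ne hj with hj | hj
    · exact ((gcd_dvd_right _ _).trans (dvd_pow_self q (Nat.sub_ne_zero_of_lt hj))).mul_left _
        |>.mul_right _
    · simp [coeff_eq_zero_of_natDegree_lt hj]
  have hu_coprime : IsCoprime u (p ^ g.natDegree) :=
    (hpq.symm.of_isCoprime_of_dvd_left (gcd_dvd_right _ _)).pow_right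
  calc gcd ((g.scaleRoots q).eval p) (q ^ g.natDegree) ∣ u ^ g.natDegree :=
        gcd_pow_right_dvd_pow_gcd
    _ ∣ g.leadingCoeff ^ g.natDegree :=
        pow_dvd_pow_of_dvd (hu_coprime.dvd_of_dvd_mul_right hu_lead) _

theorem eval_scaleRoots_num_den (g : ℤ[X]) (x : ℚ) :
    (((g.scaleRoots (x.den : ℤ)).eval x.num : ℤ) : ℚ) =
      x.den ^ g.natDegree * (g.map (Int.castRingHom ℚ)).eval x := by
  have := scaleRoots_eval₂_mul (p := g) (Int.castRingHom ℚ) x (x.den : ℤ)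
  rwa [eq_intCast, Int.cast_natCast, Rat.den_mul_eq_num, eval₂_at_intCast, eq_intCast,
    ← eval_map] at this

theorem exists_ratHeight_pow_le_mul_ratHeight_eval_map (g : ℤ[X]) :
    ∃ C : ℚ, 0 < C ∧ ∀ x : ℚ,
      (ratHeight x : ℚ) ^ g.natDegree ≤ C * ratHeight ((g.map (Int.castRingHom ℚ)).eval x) := by
  set P := g.map (Int.castRingHom ℚ)
  set d := g.natDegree
  have hPd : P.natDegree = d := natDegree_map_eq_of_injective (Int.castRingHom ℚ).injective_int g
  obtain ⟨C, hC0, hC⟩ := exists_max_abs_one_pow_le P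
  set a := g.leadingCoeff.natAbs ^ d
  have ha : 0 < a := by
    rcases eq_or_ne g 0 with rfl | hg
    · simp [a, d]
    · exact pow_pos (Int.natAbs_pos.mpr (leadingCoeff_ne_zero.mpr hg)) _
  refine ⟨C * a, by positivity, fun x => ?_⟩
  set F := (g.scaleRoots (x.den : ℤ)).eval x.num
  have hF : (F : ℚ) = x.den ^ d * P.eval x := eval_scaleRoots_num_den g x
  have hq : (0 : ℚ) < x.den ^ d := by positivity
  have hgcd : F.natAbs.gcd (x.den ^ d) ∣ a := by
    have := gcd_eval_scaleRoots_dvd_leadingCoeff_pow g (p := x.num) (q := x.den)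
      (Int.isCoprime_iff_gcd_eq_one.mpr x.reduced)
    rw [← Int.coe_gcd, Int.natCast_dvd, Int.gcd_eq_natAbs, Int.natAbs_pow, Int.natAbs_pow,
      Int.natAbs_natCast] at this
    exact this
  have hheight := ratHeight_div_mul_gcd F (pow_ne_zero d x.den_nz)
  rw [Nat.cast_pow, hF, mul_div_cancel_left₀ _ hq.ne'] at hheight
  have hmax : ((max F.natAbs (x.den ^ d) : ℕ) : ℚ) = x.den ^ d * max |P.eval x| 1 := by
    rw [Nat.cast_max, Nat.cast_natAbs, Int.cast_abs, hF, abs_mul, abs_of_pos hq,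
      mul_max_of_nonneg _ _ hq.le, mul_one, Nat.cast_pow]
  calc (ratHeight x : ℚ) ^ d = x.den ^ d * max |x| 1 ^ d := by
        rw [ratHeight_eq_den_mul_max, mul_pow]
    _ ≤ x.den ^ d * (C * max |P.eval x| 1) := by
        gcongr; rw [← hPd]; exact hC x
    _ = C * ((ratHeight (P.eval x) * F.natAbs.gcd (x.den ^ d) : ℕ) : ℚ) := by
        rw [hheight, hmax]; ring
    _ ≤ C * a * ratHeight (P.eval x) := by
        rw [mul_assoc, mul_comm (a : ℚ)]
        gcongr
        push_cast
        gcongr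
        exact_mod_cast Nat.le_of_dvd ha hgcd

theorem exists_ratHeight_pow_le_mul_ratHeight_eval (f : ℚ[X]) :
    ∃ C : ℚ, 0 < C ∧ ∀ x : ℚ, (ratHeight x : ℚ) ^ f.natDegree ≤ C * ratHeight (f.eval x) := by
  obtain ⟨c, hc, hg⟩ := IsLocalization.integerNormalization_spec (nonZeroDivisors ℤ) f
  set g := IsLocalization.integerNormalization (nonZeroDivisors ℤ) f
  rw [algebraMap_int_eq] at hg
  have hc0 : (c : ℚ) ≠ 0 := Int.cast_ne_zero.mpr (nonZeroDivisors.ne_zero hc)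
  have hdeg : g.natDegree = f.natDegree := by
    rw [← natDegree_map_eq_of_injective (Int.castRingHom ℚ).injective_int g, hg,
      ← smul_one_smul ℚ c f]
    exact natDegree_smul _ (by simpa using hc0)
  obtain ⟨C, hC0, hC⟩ := exists_ratHeight_pow_le_mul_ratHeight_eval_map g
  refine ⟨C * ratHeight c, mul_pos hC0 (by exact_mod_cast ratHeight_pos _), fun x => ?_⟩
  have hgx : (g.map (Int.castRingHom ℚ)).eval x = c * f.eval x := by
    rw [hg, eval_smul, zsmul_eq_mul]
  calc (ratHeight x : ℚ) ^ f.natDegree ≤ C * ratHeight (c * f.eval x) := by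
        rw [← hdeg, ← hgx]; exact hC x
    _ ≤ C * ratHeight c * ratHeight (f.eval x) := by
        rw [mul_assoc]; gcongr; exact_mod_cast ratHeight_mul_le _ _

theorem ncard_setOf_exists_eq_ratHeight_le_le {φ : ℚ → ℚ} {d : ℕ} (hd : d ≠ 0) {C : ℝ}
    (hC : 0 ≤ C) (h : ∀ x, (ratHeight x : ℝ) ^ d ≤ C * ratHeight (φ x)) {B : ℝ} (hB : 0 ≤ B) :
    ({y : ℚ | (∃ x, φ x = y) ∧ (ratHeight y : ℝ) ≤ B}.ncard : ℝ) ≤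
      3 * (C * B) ^ (2 / d : ℝ) := by
  set M := (C * B) ^ (d⁻¹ : ℝ)
  have hsub : {y : ℚ | (∃ x, φ x = y) ∧ (ratHeight y : ℝ) ≤ B} ⊆
      φ '' {x | (ratHeight x : ℝ) ≤ M} := by
    rintro _ ⟨⟨x, rfl⟩, hx⟩
    refine ⟨x, ?_, rfl⟩
    have hxd : (ratHeight x : ℝ) ^ d ≤ C * B := (h x).trans (by gcongr)
    rw [Set.mem_ofPred_eq, ← Real.pow_rpow_inv_natCast (Nat.cast_nonneg _) hd]
    exact Real.rpow_le_rpow (by positivity) hxd (by positivity)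
  have hM : M ^ 2 = (C * B) ^ (2 / d : ℝ) := by
    rw [← Real.rpow_natCast, ← Real.rpow_mul (by positivity), Nat.cast_ofNat, inv_mul_eq_div]
  have hfin := finite_setOf_ratHeight_le M
  calc ({y : ℚ | (∃ x, φ x = y) ∧ (ratHeight y : ℝ) ≤ B}.ncard : ℝ)
      ≤ {x : ℚ | (ratHeight x : ℝ) ≤ M}.ncard := by
        exact_mod_cast (Set.ncard_le_ncard hsub (hfin.image φ)).trans (Set.ncard_image_le hfin)
    _ ≤ 3 * M ^ 2 := ncard_setOf_ratHeight_le_le M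
    _ = 3 * (C * B) ^ (2 / d : ℝ) := by rw [hM]

theorem ncard_setOf_exists_eq_div_ncard_le {φ : ℚ → ℚ} {d : ℕ} (hd : d ≠ 0) {C : ℝ}
    (hC : 0 ≤ C) (h : ∀ x, (ratHeight x : ℝ) ^ d ≤ C * ratHeight (φ x)) {B : ℝ} (hB : 1 ≤ B) :
    ({y : ℚ | (∃ x, φ x = y) ∧ (ratHeight y : ℝ) ≤ B}.ncard : ℝ) /
        ({x : ℚ | (ratHeight x : ℝ) ≤ B}.ncard : ℝ) ≤
      144 * C ^ (2 / d : ℝ) * B ^ (2 / d - 2 : ℝ) := by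
  have hB0 : 0 < B := by linarith
  calc _ ≤ 3 * (C * B) ^ (2 / d : ℝ) / (B ^ 2 / 48) :=
        div_le_div₀ (by positivity) (ncard_setOf_exists_eq_ratHeight_le_le hd hC h hB0.le)
          (by positivity) (ncard_setOf_ratHeight_le_ge hB)
    _ = 144 * C ^ (2 / d : ℝ) * B ^ (2 / d - 2 : ℝ) := by
        rw [Real.mul_rpow hC hB0.le, Real.rpow_sub hB0, Real.rpow_two]
        field_simp
        ring

/-- For a polynomial `f ∈ ℚ[X]` of degree `d ≥ 2`, the density of the
image of `f` in `ℚ` is zero: the ratio of the number of rationals of height `≤ B` in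
the image of `f` to the number of rationals of height `≤ B` tends to `0` as `B → ∞`;
moreover for suitable constants `B₀, E₀ > 0` the ratio is at most `E₀·B^{2/d - 2}`
for all `B ≥ B₀`. -/
theorem density_of_polynomial_image_zero (f : ℚ[X]) (hd : 2 ≤ f.natDegree) :
    Filter.Tendsto
      (fun B : ℝ =>
        ({y : ℚ | (∃ x : ℚ, f.eval x = y) ∧ (ratHeight y : ℝ) ≤ B}.ncard : ℝ) /
        ({x : ℚ | (ratHeight x : ℝ) ≤ B}.ncard : ℝ))
      Filter.atTop (nhds 0) ∧
    ∃ B₀ E₀ : ℝ, 0 < B₀ ∧ 0 < E₀ ∧ ∀ B : ℝ, B₀ ≤ B →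
      ({y : ℚ | (∃ x : ℚ, f.eval x = y) ∧ (ratHeight y : ℝ) ≤ B}.ncard : ℝ) /
        ({x : ℚ | (ratHeight x : ℝ) ≤ B}.ncard : ℝ) ≤
      E₀ * B ^ (2 / (f.natDegree : ℝ) - 2) := by
  obtain ⟨C, hC0, hC⟩ := exists_ratHeight_pow_le_mul_ratHeight_eval f
  set E₀ : ℝ := 144 * (C : ℝ) ^ (2 / f.natDegree : ℝ)
  have hbound : ∀ B : ℝ, 1 ≤ B →
      ({y : ℚ | (∃ x : ℚ, f.eval x = y) ∧ (ratHeight y : ℝ) ≤ B}.ncard : ℝ) /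
        ({x : ℚ | (ratHeight x : ℝ) ≤ B}.ncard : ℝ) ≤ E₀ * B ^ (2 / (f.natDegree : ℝ) - 2) :=
    fun B => ncard_setOf_exists_eq_div_ncard_le (by omega) (by positivity)
      (fun x => by exact_mod_cast hC x)
  refine ⟨?_, 1, E₀, one_pos, by positivity, hbound⟩
  have hexp : 0 < 2 - 2 / (f.natDegree : ℝ) := by
    have : (2 : ℝ) ≤ f.natDegree := by exact_mod_cast hd
    rw [sub_pos, div_lt_iff₀ (by linarith)]
    linarith
  have hlim := (tendsto_rpow_neg_atTop hexp).const_mul E₀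
  rw [neg_sub, mul_zero] at hlim
  exact tendsto_of_tendsto_of_tendsto_of_le_of_le' tendsto_const_nhds hlim
    (.of_forall fun B => by positivity) (Filter.eventually_atTop.mpr ⟨1, hbound⟩)
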